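/- For any two policies π' and π, the ℓ¹ divergence between discounted future state distributions is bounded by an average divergence of the policies: ∑_s |d^{π'}(s) - d^π(s)| ≤ (2γ/(1-γ)) E_{s∼d^π}[D_TV(π'‖π)[s]]. -/

import Mathlib

open BigOperators Finset Matrix

noncomputable section

variable {S A : Type*}

/-- Policy transition matrix (column-stochastic): entry `(s', s)` is
`P_pol(s'|s) = ∑ a, P(s'|s,a) pol(a|s)`. -/
def Pmat [Fintype A] (P : S → A → S → ℝ) (pol : S → A → ℝ) : Matrix S S ℝ :=
  fun s' s => ∑ a, P s a s' * pol s a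

/-- Discounted future state distribution `d^π = (1-γ) ∑_t γ^t P_π^t μ`. -/
def dFut [Fintype S] [DecidableEq S] [Fintype A] (γ : ℝ) (P : S → A → S → ℝ)
    (μ : S → ℝ) (pol : S → A → ℝ) : S → ℝ :=
  fun s => (1 - γ) * ∑' t : ℕ, γ ^ t * ((Pmat P pol ^ t) *ᵥ μ) s

/-- Discounted return `J(π)` (also used as the cost return `J_C(π)` with a cost `C`
in place of the reward `R`). -/
def Jret [Fintype S] [DecidableEq S] [Fintype A] (γ : ℝ) (P : S → A → S → ℝ)
    (R : S → A → S → ℝ) (μ : S → ℝ) (pol : S → A → ℝ) : ℝ :=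
  (1 / (1 - γ)) * ∑ s, dFut γ P μ pol s * (∑ a, pol s a * (∑ s', P s a s' * R s a s'))

/-- Total variational divergence between action distributions at state `s`. -/
def DTV [Fintype A] (pol' pol : S → A → ℝ) (s : S) : ℝ :=
  (1 / 2) * ∑ a, |pol' s a - pol s a|

/-- Kullback–Leibler divergence between action distributions at state `s`. -/
def DKL [Fintype A] (pol' pol : S → A → ℝ) (s : S) : ℝ :=
  ∑ a, pol' s a * Real.log (pol' s a / pol s a)

/-- Advantage function `A^π(s,a) = Q^π(s,a) - V^π(s)` built from a value function `V`
(also used for cost advantages with a cost `C` in place of `R`). -/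
def Adv [Fintype S] (γ : ℝ) (P : S → A → S → ℝ) (R : S → A → S → ℝ)
    (V : S → ℝ) (s : S) (a : A) : ℝ :=
  (∑ s', P s a s' * (R s a s' + γ * V s')) - V s

/-- `ε_f^{π'} = max_s |E_{a∼π'(·|s), s'∼P}[δ_f(s,a,s')]|` where
`δ_f(s,a,s') = R(s,a,s') + γ f(s') - f(s)`. -/
def epsF [Fintype S] [Fintype A] (γ : ℝ) (P : S → A → S → ℝ) (R : S → A → S → ℝ)
    (f : S → ℝ) (pol' : S → A → ℝ) : ℝ :=
  ⨆ s, |∑ a, pol' s a * (∑ s', P s a s' * (R s a s' + γ * f s' - f s))|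

/-- Surrogate `L_{π,f}(π') = E_{s∼d^π, a∼π, s'∼P}[(π'(a|s)/π(a|s) - 1) δ_f(s,a,s')]`. -/
def Lsurr [Fintype S] [DecidableEq S] [Fintype A] (γ : ℝ) (P : S → A → S → ℝ)
    (R : S → A → S → ℝ) (μ : S → ℝ) (f : S → ℝ) (pol pol' : S → A → ℝ) : ℝ :=
  ∑ s, dFut γ P μ pol s * (∑ a, pol s a * (∑ s', P s a s' *
    ((pol' s a / pol s a - 1) * (R s a s' + γ * f s' - f s))))

/-! Both discounted distributions are fixed points, `d = (1-γ) μ + γ P_π d`, so their difference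
satisfies `d' - d = γ P_{π'} (d' - d) + γ (P_{π'} - P_π) d`. The column-stochastic matrix `P_{π'}`
does not increase the ℓ¹ norm, and the `j`-th column of `P_{π'} - P_π` has ℓ¹ norm at most
`2 D_TV(π'‖π)[j]`; hence `(1-γ) ‖d' - d‖₁ ≤ 2γ ∑ⱼ d(j) D_TV(π'‖π)[j]`. -/

section ColStochastic

theorem sum_abs_mulVec_le {m n : Type*} [Fintype m] [Fintype n] (B : Matrix m n ℝ)
    (x : n → ℝ) :
    ∑ i, |(B *ᵥ x) i| ≤ ∑ j, (∑ i, |B i j|) * |x j| :=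
  calc ∑ i, |(B *ᵥ x) i| ≤ ∑ i, ∑ j, |B i j| * |x j| :=
        sum_le_sum fun i _ =>
          (abs_sum_le_sum_abs (fun j => B i j * x j) univ).trans_eq (by simp only [abs_mul])
    _ = ∑ j, (∑ i, |B i j|) * |x j| := by rw [sum_comm]; simp only [sum_mul]

variable {n : Type*} [Fintype n] [DecidableEq n] {M : Matrix n n ℝ} {γ : ℝ}

theorem sum_abs_mulVec_le_of_mem_colStochastic (hM : M ∈ colStochastic ℝ n) (x : n → ℝ) :
    ∑ i, |(M *ᵥ x) i| ≤ ∑ i, |x i| :=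
  (sum_abs_mulVec_le M x).trans_eq <| by
    simp only [abs_of_nonneg (nonneg_of_mem_colStochastic hM), sum_col_of_mem_colStochastic hM,
      one_mul]

theorem abs_pow_mulVec_le_of_mem_colStochastic (hM : M ∈ colStochastic ℝ n) (x : n → ℝ)
    (t : ℕ) (i : n) : |(M ^ t *ᵥ x) i| ≤ ∑ j, |x j| :=
  (single_le_sum (fun j _ => abs_nonneg ((M ^ t *ᵥ x) j)) (mem_univ i)).trans
    (sum_abs_mulVec_le_of_mem_colStochastic (pow_mem hM t) x)

theorem summable_geometric_smul_pow_mulVec (hγ0 : 0 ≤ γ) (hγ1 : γ < 1)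
    (hM : M ∈ colStochastic ℝ n) (x : n → ℝ) :
    Summable fun t : ℕ => γ ^ t • (M ^ t *ᵥ x) := by
  refine Pi.summable.2 fun i => Summable.of_norm_bounded
    ((summable_geometric_of_lt_one hγ0 hγ1).mul_right (∑ j, |x j|)) fun t => ?_
  rw [Pi.smul_apply, smul_eq_mul, Real.norm_eq_abs, abs_mul, abs_pow, abs_of_nonneg hγ0]
  exact mul_le_mul_of_nonneg_left (abs_pow_mulVec_le_of_mem_colStochastic hM x t i)
    (pow_nonneg hγ0 t)

theorem tsum_geometric_smul_pow_mulVec_eq (hγ0 : 0 ≤ γ) (hγ1 : γ < 1)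
    (hM : M ∈ colStochastic ℝ n) (x : n → ℝ) :
    ∑' t : ℕ, γ ^ t • (M ^ t *ᵥ x)
      = x + γ • (M *ᵥ ∑' t : ℕ, γ ^ t • (M ^ t *ᵥ x)) := by
  have hv := (summable_geometric_smul_pow_mulVec hγ0 hγ1 hM x).hasSum
  have hstep : (fun t : ℕ => γ ^ (t + 1) • (M ^ (t + 1) *ᵥ x))
      = fun t => γ • (M *ᵥ (γ ^ t • (M ^ t *ᵥ x))) := by
    ext t : 1
    rw [mulVec_smul, smul_smul, pow_succ', pow_succ', ← mulVec_mulVec]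
  have hshift := (hasSum_nat_add_iff' 1).2 hv
  rw [hstep] at hshift
  have hmap := (hv.map M.mulVecLin (LinearMap.continuous_of_finiteDimensional _)).const_smul γ
  have hsplit := hshift.unique hmap
  rw [sub_eq_iff_eq_add'] at hsplit
  simpa only [range_one, sum_singleton, pow_zero, one_mulVec, one_smul, mulVecBilin_apply]
    using hsplit

theorem one_sub_mul_sum_abs_sub_le (hγ0 : 0 ≤ γ) {M' : Matrix n n ℝ}
    (hM' : M' ∈ colStochastic ℝ n) {μ d d' : n → ℝ}
    (hd : d = (1 - γ) • μ + γ • (M *ᵥ d)) (hd' : d' = (1 - γ) • μ + γ • (M' *ᵥ d')) :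
    (1 - γ) * ∑ i, |d' i - d i| ≤ γ * ∑ j, (∑ i, |M' i j - M i j|) * |d j| := by
  have hdiff : d' - d = γ • (M' *ᵥ (d' - d) + (M' - M) *ᵥ d) := by
    conv_lhs => rw [hd', hd]
    rw [mulVec_sub, sub_mulVec]
    module
  have hsum : ∑ i, |d' i - d i|
      ≤ γ * (∑ i, |d' i - d i| + ∑ j, (∑ i, |M' i j - M i j|) * |d j|) :=
    calc ∑ i, |d' i - d i|
        = ∑ i, |γ * ((M' *ᵥ (d' - d)) i + ((M' - M) *ᵥ d) i)| :=
          sum_congr rfl fun i _ => congrArg (fun v : n → ℝ => |v i|) hdiff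
      _ ≤ γ * ∑ i, (|(M' *ᵥ (d' - d)) i| + |((M' - M) *ᵥ d) i|) := by
          rw [mul_sum]
          gcongr with i
          rw [abs_mul, abs_of_nonneg hγ0]
          exact mul_le_mul_of_nonneg_left (abs_add_le _ _) hγ0
      _ ≤ γ * (∑ i, |d' i - d i| + ∑ j, (∑ i, |M' i j - M i j|) * |d j|) := by
          rw [sum_add_distrib]
          exact mul_le_mul_of_nonneg_left (add_le_add
            (sum_abs_mulVec_le_of_mem_colStochastic hM' _) (sum_abs_mulVec_le _ _)) hγ0
  linarith

end ColStochastic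

section MDP

variable [Fintype S] [Fintype A] {P : S → A → S → ℝ}

theorem sum_abs_Pmat_sub_le (hP0 : ∀ s a s', 0 ≤ P s a s')
    (hP1 : ∀ s a, (∑ s', P s a s') = 1) (pol pol' : S → A → ℝ) (s : S) :
    ∑ s', |Pmat P pol' s' s - Pmat P pol s' s| ≤ 2 * DTV pol' pol s :=
  calc ∑ s', |Pmat P pol' s' s - Pmat P pol s' s|
      = ∑ s', |∑ a, P s a s' * (pol' s a - pol s a)| := by
        simp only [Pmat, ← sum_sub_distrib, mul_sub]
    _ ≤ ∑ s', ∑ a, P s a s' * |pol' s a - pol s a| :=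
        sum_le_sum fun s' _ => (abs_sum_le_sum_abs _ _).trans_eq
          (by simp only [abs_mul, abs_of_nonneg (hP0 _ _ _)])
    _ = ∑ a, |pol' s a - pol s a| := by
        rw [sum_comm]
        simp only [← sum_mul, hP1, one_mul]
    _ = 2 * DTV pol' pol s := by
        rw [DTV]
        ring

variable [DecidableEq S] {pol : S → A → ℝ} {γ : ℝ}

theorem Pmat_mem_colStochastic (hP0 : ∀ s a s', 0 ≤ P s a s')
    (hP1 : ∀ s a, (∑ s', P s a s') = 1) (hpol0 : ∀ s a, 0 ≤ pol s a)
    (hpol1 : ∀ s, (∑ a, pol s a) = 1) : Pmat P pol ∈ colStochastic ℝ S := by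
  refine mem_colStochastic_iff_sum.2 ⟨fun s' s => ?_, fun s => ?_⟩
  · exact sum_nonneg fun a _ => mul_nonneg (hP0 s a s') (hpol0 s a)
  · simp only [Pmat]
    rw [sum_comm]
    simp only [← sum_mul, hP1, one_mul, hpol1]

theorem dFut_nonneg (hγ0 : 0 ≤ γ) (hγ1 : γ ≤ 1) (hM : Pmat P pol ∈ colStochastic ℝ S)
    {μ : S → ℝ} (hμ0 : ∀ s, 0 ≤ μ s) (s : S) : 0 ≤ dFut γ P μ pol s :=
  mul_nonneg (sub_nonneg.2 hγ1) <| tsum_nonneg fun t =>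
    mul_nonneg (pow_nonneg hγ0 t) (nonneg_mulVec_of_mem_colStochastic (pow_mem hM t) hμ0 s)

theorem dFut_eq_add_smul_mulVec (hγ0 : 0 ≤ γ) (hγ1 : γ < 1)
    (hM : Pmat P pol ∈ colStochastic ℝ S) (μ : S → ℝ) :
    dFut γ P μ pol = (1 - γ) • μ + γ • (Pmat P pol *ᵥ dFut γ P μ pol) := by
  have hd : dFut γ P μ pol = (1 - γ) • ∑' t : ℕ, γ ^ t • (Pmat P pol ^ t *ᵥ μ) := by
    ext s
    rw [Pi.smul_apply, tsum_apply (summable_geometric_smul_pow_mulVec hγ0 hγ1 hM μ)]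
    rfl
  rw [hd]
  nth_rewrite 1 [tsum_geometric_smul_pow_mulVec_eq hγ0 hγ1 hM μ]
  rw [smul_add, mulVec_smul, smul_comm]

end MDP

theorem dFut_l1_bound_general
    [Fintype S] [DecidableEq S] [Fintype A]
    (γ : ℝ) (hγ0 : 0 ≤ γ) (hγ1 : γ < 1)
    (P : S → A → S → ℝ) (hP0 : ∀ s a s', 0 ≤ P s a s')
    (hP1 : ∀ s a, (∑ s', P s a s') = 1)
    (μ : S → ℝ) (hμ0 : ∀ s, 0 ≤ μ s)
    (pol pol' : S → A → ℝ)
    (hpol0 : ∀ s a, 0 ≤ pol s a) (hpol1 : ∀ s, (∑ a, pol s a) = 1)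
    (hpol'0 : ∀ s a, 0 ≤ pol' s a) (hpol'1 : ∀ s, (∑ a, pol' s a) = 1) :
    (∑ s, |dFut γ P μ pol' s - dFut γ P μ pol s|)
      ≤ (2 * γ / (1 - γ)) * ∑ s, dFut γ P μ pol s * DTV pol' pol s := by
  have hM := Pmat_mem_colStochastic hP0 hP1 hpol0 hpol1
  have hM' := Pmat_mem_colStochastic hP0 hP1 hpol'0 hpol'1
  have hd := dFut_nonneg hγ0 hγ1.le hM hμ0
  have hperturb := one_sub_mul_sum_abs_sub_le hγ0 hM'
    (dFut_eq_add_smul_mulVec hγ0 hγ1 hM μ) (dFut_eq_add_smul_mulVec hγ0 hγ1 hM' μ)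
  rw [div_mul_eq_mul_div, le_div_iff₀ (sub_pos.2 hγ1), mul_comm]
  calc (1 - γ) * ∑ s, |dFut γ P μ pol' s - dFut γ P μ pol s|
      ≤ γ * ∑ s, (∑ s', |Pmat P pol' s' s - Pmat P pol s' s|) * |dFut γ P μ pol s| :=
        hperturb
    _ ≤ γ * ∑ s, 2 * DTV pol' pol s * dFut γ P μ pol s := by
        simp only [abs_of_nonneg (hd _)]
        gcongr with s
        exacts [hd s, sum_abs_Pmat_sub_le hP0 hP1 pol pol' s]
    _ = 2 * γ * ∑ s, dFut γ P μ pol s * DTV pol' pol s := by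
        rw [mul_sum, mul_sum]
        exact sum_congr rfl fun s _ => by ring

/-- **Lemma 3 of the appendix.** The ℓ¹ divergence between discounted future state
distributions is bounded by an average divergence of the policies:
`‖d^{π'} - d^π‖₁ ≤ (2γ/(1-γ)) E_{s∼d^π}[D_TV(π'‖π)[s]]`. -/
theorem dFut_l1_bound
    [Fintype S] [DecidableEq S] [Nonempty S] [Fintype A] [Nonempty A]
    (γ : ℝ) (hγ0 : 0 ≤ γ) (hγ1 : γ < 1)
    (P : S → A → S → ℝ) (hP0 : ∀ s a s', 0 ≤ P s a s')
    (hP1 : ∀ s a, (∑ s', P s a s') = 1)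
    (μ : S → ℝ) (hμ0 : ∀ s, 0 ≤ μ s) (hμ1 : (∑ s, μ s) = 1)
    (pol pol' : S → A → ℝ)
    (hpol0 : ∀ s a, 0 ≤ pol s a) (hpol1 : ∀ s, (∑ a, pol s a) = 1)
    (hpol'0 : ∀ s a, 0 ≤ pol' s a) (hpol'1 : ∀ s, (∑ a, pol' s a) = 1) :
    (∑ s, |dFut γ P μ pol' s - dFut γ P μ pol s|)
      ≤ (2 * γ / (1 - γ)) * ∑ s, dFut γ P μ pol s * DTV pol' pol s :=
  dFut_l1_bound_general γ hγ0 hγ1 P hP0 hP1 μ hμ0 pol pol' hpol0 hpol1 hpol'0 hpol'1
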